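/- A continuous self-map f of a compact metric space X is weakly mixing if and only if for every finite collection of nonempty open sets U_1,...,U_m there exists a strictly increasing sequence (r_n) of positive integers such that the closures of f^{r_n}(U_i) converge to X in the Hausdorff metric for each i = 1,...,m. -/

import Mathlib

/-!
Weak mixing is upgraded, by Furstenberg's intersection lemma, from two pairs of open sets to any
finite family of pairs: one common return time `k` with `f^[k] '' Uᵢ ∩ Vᵢ ≠ ∅` for all `i`, and
such times are unbounded because `f` is onto. Taking the `Vᵢ` to be the balls of a finite
`ε`-net of `X` puts every `f^[k] '' Uᵢ` `ε`-close to `X`, and a diagonal choice of such times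
for `ε = 1 / (n + 1)` gives the sequence `r`. Conversely, once `f^[r j] '' Uᵢ` is Hausdorff-close
to `X` it meets any given ball, which yields the two simultaneous hits.
-/

open Set Metric Filter Topology

section Topological

variable {X : Type*} [TopologicalSpace X]

def IsWeaklyMixing (f : X → X) : Prop :=
  ∀ U₁ U₂ V₁ V₂ : Set X, IsOpen U₁ → IsOpen U₂ → IsOpen V₁ → IsOpen V₂ →
    U₁.Nonempty → U₂.Nonempty → V₁.Nonempty → V₂.Nonempty →
    ∃ k : ℕ, 1 ≤ k ∧ (f^[k] '' U₁ ∩ V₁).Nonempty ∧ (f^[k] '' U₂ ∩ V₂).Nonempty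

namespace IsWeaklyMixing

variable {f : X → X}

theorem surjective [CompactSpace X] [T2Space X] (h : IsWeaklyMixing f) (hf : Continuous f) :
    Function.Surjective f := by
  by_contra hns
  have hV : IsOpen (range f)ᶜ := (isCompact_range hf).isClosed.isOpen_compl
  have hVne : (range f)ᶜ.Nonempty := nonempty_compl.2 fun hr => hns (range_eq_univ.1 hr)
  have : Nonempty X := ⟨hVne.some⟩
  obtain ⟨k, hk, ⟨_, ⟨x, -, rfl⟩, hx⟩, -⟩ :=
    h univ univ _ _ isOpen_univ isOpen_univ hV hV univ_nonempty univ_nonempty hVne hVne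
  obtain ⟨j, rfl⟩ := Nat.exists_eq_add_of_le' hk
  exact hx ⟨f^[j] x, (Function.iterate_succ_apply' f j x).symm⟩

/-- Furstenberg's intersection lemma. -/
theorem exists_open_inter_nonempty_imp (h : IsWeaklyMixing f) (hf : Continuous f)
    {U₁ V₁ U₂ V₂ : Set X} (hU₁ : IsOpen U₁) (hV₁ : IsOpen V₁) (hU₂ : IsOpen U₂)
    (hV₂ : IsOpen V₂) (hU₁ne : U₁.Nonempty) (hV₁ne : V₁.Nonempty) (hU₂ne : U₂.Nonempty)
    (hV₂ne : V₂.Nonempty) :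
    ∃ A B : Set X, IsOpen A ∧ IsOpen B ∧ A.Nonempty ∧ B.Nonempty ∧
      ∀ n, (f^[n] '' A ∩ B).Nonempty →
        (f^[n] '' U₁ ∩ V₁).Nonempty ∧ (f^[n] '' U₂ ∩ V₂).Nonempty := by
  obtain ⟨k, -, ⟨_, ⟨a, ha, rfl⟩, ha'⟩, ⟨_, ⟨b, hb, rfl⟩, hb'⟩⟩ :=
    h U₁ V₁ U₂ V₂ hU₁ hV₁ hU₂ hV₂ hU₁ne hV₁ne hU₂ne hV₂ne
  refine ⟨U₁ ∩ f^[k] ⁻¹' U₂, V₁ ∩ f^[k] ⁻¹' V₂, hU₁.inter (hU₂.preimage (hf.iterate k)),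
    hV₁.inter (hV₂.preimage (hf.iterate k)), ⟨a, ha, ha'⟩, ⟨b, hb, hb'⟩, ?_⟩
  rintro n ⟨_, ⟨x, ⟨hx₁, hx₂⟩, rfl⟩, hy₁, hy₂⟩
  refine ⟨⟨_, mem_image_of_mem _ hx₁, hy₁⟩, ⟨_, mem_image_of_mem _ hx₂, ?_⟩⟩
  rwa [mem_preimage, ← Function.iterate_add_apply, add_comm,
    Function.iterate_add_apply] at hy₂

theorem exists_open_forall_inter_nonempty_imp [Nonempty X] (h : IsWeaklyMixing f)
    (hf : Continuous f) {ι : Type*} (s : Finset ι) {U V : ι → Set X} (hU : ∀ i, IsOpen (U i))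
    (hV : ∀ i, IsOpen (V i)) (hUne : ∀ i, (U i).Nonempty) (hVne : ∀ i, (V i).Nonempty) :
    ∃ A B : Set X, IsOpen A ∧ IsOpen B ∧ A.Nonempty ∧ B.Nonempty ∧
      ∀ n, (f^[n] '' A ∩ B).Nonempty → ∀ i ∈ s, (f^[n] '' U i ∩ V i).Nonempty := by
  classical
  induction s using Finset.induction_on with
  | empty =>
    exact ⟨univ, univ, isOpen_univ, isOpen_univ, univ_nonempty, univ_nonempty, by simp⟩
  | insert i s _ ih =>
    obtain ⟨A, B, hA, hB, hAne, hBne, hAB⟩ := ih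
    obtain ⟨A', B', hA', hB', hA'ne, hB'ne, hA'B'⟩ :=
      h.exists_open_inter_nonempty_imp hf (hU i) (hV i) hA hB (hUne i) (hVne i) hAne hBne
    refine ⟨A', B', hA', hB', hA'ne, hB'ne, fun n hn => ?_⟩
    obtain ⟨hi, hs⟩ := hA'B' n hn
    exact Finset.forall_mem_insert _ _ _ |>.2 ⟨hi, hAB n hs⟩

theorem exists_forall_inter_nonempty (h : IsWeaklyMixing f) (hf : Continuous f) {ι : Type*}
    [Finite ι] {U V : ι → Set X} (hU : ∀ i, IsOpen (U i)) (hV : ∀ i, IsOpen (V i))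
    (hUne : ∀ i, (U i).Nonempty) (hVne : ∀ i, (V i).Nonempty) :
    ∃ k, ∀ i, (f^[k] '' U i ∩ V i).Nonempty := by
  cases isEmpty_or_nonempty X
  · exact ⟨0, fun i => isEmptyElim (hUne i).some⟩
  have := Fintype.ofFinite ι
  obtain ⟨A, B, hA, hB, hAne, hBne, hAB⟩ :=
    h.exists_open_forall_inter_nonempty_imp hf Finset.univ hU hV hUne hVne
  obtain ⟨k, -, hk, -⟩ := h A A B B hA hA hB hB hAne hAne hBne hBne
  exact ⟨k, fun i => hAB k hk i (Finset.mem_univ i)⟩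

theorem frequently_forall_inter_nonempty [CompactSpace X] [T2Space X] (h : IsWeaklyMixing f)
    (hf : Continuous f) {ι : Type*} [Finite ι] {U V : ι → Set X} (hU : ∀ i, IsOpen (U i))
    (hV : ∀ i, IsOpen (V i)) (hUne : ∀ i, (U i).Nonempty) (hVne : ∀ i, (V i).Nonempty) :
    ∃ᶠ k in atTop, ∀ i, (f^[k] '' U i ∩ V i).Nonempty := by
  refine frequently_atTop.2 fun K => ?_
  have hK := (h.surjective hf).iterate K
  obtain ⟨k, hk⟩ := h.exists_forall_inter_nonempty hf hU
    (fun i => (hV i).preimage (hf.iterate K)) hUne (fun i => (hVne i).preimage hK)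
  refine ⟨K + k, K.le_add_right k, fun i => ?_⟩
  obtain ⟨_, ⟨x, hx, rfl⟩, hy⟩ := hk i
  exact ⟨_, ⟨x, hx, Function.iterate_add_apply f K k x⟩, hy⟩

end IsWeaklyMixing

end Topological

section Metric

variable {X : Type*} [PseudoMetricSpace X]

theorem hausdorffDist_univ_le {s : Set X} {r : ℝ} (hr : 0 ≤ r)
    (h : ∀ x, ∃ y ∈ s, dist x y ≤ r) : hausdorffDist s univ ≤ r :=
  hausdorffDist_le_of_mem_dist hr (fun x _ => ⟨x, mem_univ x, (dist_self x).le.trans hr⟩)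
    fun x _ => h x

theorem eventually_inter_nonempty_of_tendsto_hausdorffDist_univ [BoundedSpace X] {α : Type*}
    {l : Filter α} {S : α → Set X} (hS : ∀ a, (S a).Nonempty)
    (h : Tendsto (fun a => hausdorffDist (S a) univ) l (𝓝 0)) {V : Set X} (hV : IsOpen V)
    (hVne : V.Nonempty) : ∀ᶠ a in l, (S a ∩ V).Nonempty := by
  obtain ⟨x, hx⟩ := hVne
  obtain ⟨ε, hε, hball⟩ := isOpen_iff.1 hV x hx
  filter_upwards [h.eventually (gt_mem_nhds hε)] with a ha
  obtain ⟨y, hy, hxy⟩ := exists_dist_lt_of_hausdorffDist_lt' (mem_univ x) ha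
    (hausdorffEDist_ne_top_of_nonempty_of_bounded (hS a) ((hS a).mono (subset_univ _))
      (Bornology.IsBounded.all _) (Bornology.IsBounded.all _))
  exact ⟨y, hy, hball hxy⟩

theorem IsWeaklyMixing.frequently_hausdorffDist_image_univ_le [CompactSpace X] [T2Space X]
    {f : X → X} (h : IsWeaklyMixing f) (hf : Continuous f) {ι : Type*} [Finite ι]
    {U : ι → Set X} (hU : ∀ i, IsOpen (U i)) (hUne : ∀ i, (U i).Nonempty) {ε : ℝ}
    (hε : 0 < ε) : ∃ᶠ k in atTop, ∀ i, hausdorffDist (f^[k] '' U i) univ ≤ ε := by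
  obtain ⟨t, -, ht, hcover⟩ := finite_cover_balls_of_compact (isCompact_univ (X := X)) (half_pos hε)
  have := ht.to_subtype
  refine (h.frequently_forall_inter_nonempty hf (U := fun p : ι × t => U p.1)
    (V := fun p => ball p.2 (ε / 2)) (fun p => hU p.1) (fun _ => isOpen_ball)
    (fun p => hUne p.1) (fun _ => nonempty_ball.2 (half_pos hε))).mono fun k hk i => ?_
  refine hausdorffDist_univ_le hε.le fun x => ?_
  obtain ⟨c, hc, hxc⟩ := mem_iUnion₂.1 (hcover (mem_univ x))
  obtain ⟨y, hy, hyc⟩ := hk (i, ⟨c, hc⟩)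
  refine ⟨y, hy, ((dist_triangle_right x y c).trans ?_)⟩
  linarith [mem_ball.1 hxc, mem_ball.1 hyc]

end Metric

theorem exists_strictMono_tendsto_zero_of_frequently_le {ι : Type*} {g : ι → ℕ → ℝ}
    (hg : ∀ i k, 0 ≤ g i k) (h : ∀ ε > 0, ∃ᶠ k in atTop, ∀ i, g i k ≤ ε) (N : ℕ) :
    ∃ r : ℕ → ℕ, StrictMono r ∧ N ≤ r 0 ∧ ∀ i, Tendsto (fun j => g i (r j)) atTop (𝓝 0) := by
  obtain ⟨r, hr, hrg⟩ := extraction_forall_of_frequently fun n =>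
    ((h _ (Nat.one_div_pos_of_nat (n := n))).and_eventually (eventually_ge_atTop N))
  refine ⟨r, hr, (hrg 0).2, fun i => ?_⟩
  exact squeeze_zero (fun j => hg i (r j)) (fun j => (hrg j).1 i)
    tendsto_one_div_add_atTop_nhds_zero_nat

/-- A continuous self-map `f` of a compact metric space is weakly mixing
iff for every finite collection of nonempty open sets `U_1, ..., U_m` there is a
strictly increasing sequence `(r_n)` of positive integers with
`closure (f^{r_n}(U_i)) → X` in the Hausdorff metric for each `i`. -/
theorem stmt5 {X : Type*} [MetricSpace X] [CompactSpace X]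
    (f : X → X) (hf : Continuous f) :
    (∀ U₁ U₂ V₁ V₂ : Set X, IsOpen U₁ → IsOpen U₂ → IsOpen V₁ → IsOpen V₂ →
      U₁.Nonempty → U₂.Nonempty → V₁.Nonempty → V₂.Nonempty →
      ∃ k : ℕ, 1 ≤ k ∧ (f^[k] '' U₁ ∩ V₁).Nonempty ∧ (f^[k] '' U₂ ∩ V₂).Nonempty) ↔
    (∀ (m : ℕ) (U : Fin m → Set X), (∀ i, IsOpen (U i)) → (∀ i, (U i).Nonempty) →
      ∃ r : ℕ → ℕ, StrictMono r ∧ 1 ≤ r 0 ∧ ∀ i,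
        Filter.Tendsto (fun j : ℕ => Metric.hausdorffDist (closure (f^[r j] '' U i)) (Set.univ : Set X))
          Filter.atTop (nhds 0)) := by
  change IsWeaklyMixing f ↔ _
  simp only [hausdorffDist_closure₁]
  refine ⟨fun h m U hU hUne => ?_, fun h U₁ U₂ V₁ V₂ hU₁ hU₂ hV₁ hV₂ hU₁ne hU₂ne hV₁ne hV₂ne => ?_⟩
  · exact exists_strictMono_tendsto_zero_of_frequently_le (fun _ _ => hausdorffDist_nonneg)
      (fun ε hε => h.frequently_hausdorffDist_image_univ_le hf hU hUne hε) 1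
  · obtain ⟨r, hr, hr0, hlim⟩ := h 2 ![U₁, U₂] (Fin.forall_fin_two.2 ⟨hU₁, hU₂⟩)
      (Fin.forall_fin_two.2 ⟨hU₁ne, hU₂ne⟩)
    have hit {U V : Set X} (hUne : U.Nonempty) (hV : IsOpen V) (hVne : V.Nonempty)
        (hlim : Tendsto (fun j => hausdorffDist (f^[r j] '' U) univ) atTop (𝓝 0)) :
        ∀ᶠ j in atTop, (f^[r j] '' U ∩ V).Nonempty :=
      eventually_inter_nonempty_of_tendsto_hausdorffDist_univ (fun _ => hUne.image _) hlim hV hVne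
    obtain ⟨j, h₁, h₂⟩ := ((hit hU₁ne hV₁ hV₁ne (hlim 0)).and (hit hU₂ne hV₂ hV₂ne (hlim 1))).exists
    exact ⟨r j, hr0.trans (hr.monotone j.zero_le), h₁, h₂⟩
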